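/- Let 𝕂 be a non-discrete Hausdorff topological field, E, F Hausdorff topological 𝕂-vector spaces, N ⊆ E a closed subspace with quotient map q : E → E/N, U₁ ⊆ E/N open, and U ⊆ E open with q(U) = U₁. If f₁ : U₁ → F is a map such that f := f₁ ∘ q|_U is continuous, then f₁ is continuous. More generally, if f is C¹ in the BGN sense, then f₁ is C¹ in the BGN sense. -/

import Mathlib

/-! The quotient map `q : E → E ⧸ N` is open, so a function on `q '' U` whose pull-back to the
open set `U` is continuous is itself continuous. For the C¹ case apply this to the open map
`q × q × id` on `U⁽¹⁾`: the difference quotient `g` of `f₁ ∘ q` is constant on its fibres, since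
for `t ≠ 0` it equals `t⁻¹ • (f₁ (q x + t • q v) - f₁ (q x))`, and at `t = 0` it is the limit of
these values, `0` being non-isolated in `𝕂` and `F` Hausdorff. -/

open Filter Topology Set

theorem IsOpenMap.continuousOn_of_comp {X Y Z : Type*} [TopologicalSpace X] [TopologicalSpace Y]
    [TopologicalSpace Z] {q : X → Y} (hq : IsOpenMap q) {U : Set X} (hU : IsOpen U) {f : Y → Z}
    (hf : ContinuousOn (f ∘ q) U) : ContinuousOn f (q '' U) := by
  rintro _ ⟨x, hx, rfl⟩
  exact ContinuousAt.continuousWithinAt <|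
    (tendsto_map'_iff.2 (hf.continuousAt (hU.mem_nhds hx))).mono_left (hq.nhds_le x)

theorem IsOpenMap.exists_continuousOn_comp_eq {X Y Z : Type*} [TopologicalSpace X]
    [TopologicalSpace Y] [TopologicalSpace Z] [Nonempty X] {q : X → Y} (hq : IsOpenMap q)
    {D : Set X} (hD : IsOpen D) {g : X → Z} (hg : ContinuousOn g D)
    (hfib : ∀ p ∈ D, ∀ p' ∈ D, q p = q p' → g p = g p') :
    ∃ g₁ : Y → Z, ContinuousOn g₁ (q '' D) ∧ ∀ p ∈ D, g₁ (q p) = g p := by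
  have hsec : ∀ p ∈ D, g (Function.invFunOn q D (q p)) = g p := fun p hp =>
    hfib _ (Function.invFunOn_mem ⟨p, hp, rfl⟩) p hp (Function.invFunOn_eq ⟨p, hp, rfl⟩)
  exact ⟨g ∘ Function.invFunOn q D,
    hq.continuousOn_of_comp hD (hg.congr hsec), hsec⟩

section DiffQuot

variable (𝕂 : Type*) {E : Type*} [Field 𝕂] [AddCommGroup E] [Module 𝕂 E]

/-- The set `U⁽¹⁾` of Bertram–Glöckner–Neeb, on which the difference quotient of a map on `U`
lives. -/
def diffQuotDomain (U : Set E) : Set (E × E × 𝕂) := {p | p.1 ∈ U ∧ p.1 + p.2.2 • p.2.1 ∈ U}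

variable {𝕂}

theorem isOpen_diffQuotDomain [TopologicalSpace 𝕂] [TopologicalSpace E] [ContinuousAdd E]
    [ContinuousSMul 𝕂 E] {U : Set E} (hU : IsOpen U) : IsOpen (diffQuotDomain 𝕂 U) :=
  (hU.preimage continuous_fst).inter (hU.preimage (by fun_prop))

theorem image_diffQuotDomain_of_surjective {E' : Type*} [AddCommGroup E'] [Module 𝕂 E']
    {φ : E →ₗ[𝕂] E'} (hφ : Function.Surjective φ) (U : Set E) :
    Prod.map φ (Prod.map φ id) '' diffQuotDomain 𝕂 U = diffQuotDomain 𝕂 (φ '' U) := by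
  ext ⟨x₁, v₁, t⟩
  constructor
  · rintro ⟨⟨x, v, t⟩, ⟨hx, hy⟩, h⟩
    simp only [Prod.map_apply, id_eq, Prod.mk.injEq] at h
    obtain ⟨rfl, rfl, rfl⟩ := h
    exact ⟨mem_image_of_mem φ hx, by simpa using mem_image_of_mem φ hy⟩
  · rintro ⟨⟨x, hx, rfl⟩, ⟨y, hy, hxy⟩⟩
    by_cases ht : t = 0
    · obtain ⟨v, rfl⟩ := hφ v₁
      exact ⟨(x, v, t), ⟨hx, by simpa [ht] using hx⟩, rfl⟩
    · refine ⟨(x, t⁻¹ • (y - x), t), ⟨hx, by simpa [smul_inv_smul₀ ht] using hy⟩, ?_⟩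
      simp [hxy, ht]

theorem diffQuot_eq_of_map_eq [TopologicalSpace 𝕂] [TopologicalSpace E] [ContinuousAdd E]
    [ContinuousSMul 𝕂 E] {E' F : Type*} [AddCommGroup E'] [Module 𝕂 E'] [AddCommGroup F]
    [Module 𝕂 F] [TopologicalSpace F] [T2Space F] (hK : Dense {t : 𝕂 | t ≠ 0}) (φ : E →ₗ[𝕂] E')
    (f₁ : E' → F) {U : Set E} (hU : IsOpen U) {g : E × E × 𝕂 → F}
    (hg : ContinuousOn g (diffQuotDomain 𝕂 U))
    (hgeq : ∀ p ∈ diffQuotDomain 𝕂 U, f₁ (φ (p.1 + p.2.2 • p.2.1)) - f₁ (φ p.1) = p.2.2 • g p) :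
    ∀ p ∈ diffQuotDomain 𝕂 U, ∀ p' ∈ diffQuotDomain 𝕂 U,
      Prod.map φ (Prod.map φ id) p = Prod.map φ (Prod.map φ id) p' → g p = g p' := by
  have hquot : ∀ x v s, (x, v, s) ∈ diffQuotDomain 𝕂 U → s ≠ 0 →
      g (x, v, s) = s⁻¹ • (f₁ (φ x + s • φ v) - f₁ (φ x)) := fun x v s hp hs => by
    rw [← map_smul, ← map_add, hgeq _ hp, inv_smul_smul₀ hs]
  have hcurve : ∀ x v, (x, v, 0) ∈ diffQuotDomain 𝕂 U →
      Tendsto (fun s => g (x, v, s)) (𝓝[≠] 0) (𝓝 (g (x, v, 0))) ∧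
        ∀ᶠ s in 𝓝[≠] 0, (x, v, s) ∈ diffQuotDomain 𝕂 U ∧ s ≠ 0 := fun x v hp => by
    have hc : Continuous fun s : 𝕂 => (x, v, s) := by fun_prop
    have hD := (isOpen_diffQuotDomain hU).mem_nhds hp
    exact ⟨((hg.continuousAt hD).tendsto.comp (hc.tendsto 0)).mono_left nhdsWithin_le_nhds,
      Eventually.and (nhdsWithin_le_nhds (hc.tendsto 0 hD)) self_mem_nhdsWithin⟩
  rintro ⟨x, v, t⟩ hp ⟨x', v', t'⟩ hp' h
  simp only [Prod.map_apply, id_eq, Prod.mk.injEq] at h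
  obtain ⟨hx, hv, rfl⟩ := h
  rcases eq_or_ne t 0 with rfl | ht
  · have : (𝓝[≠] (0 : 𝕂)).NeBot := mem_closure_iff_nhdsWithin_neBot.1 (hK 0)
    obtain ⟨hlim, hev⟩ := hcurve x v hp
    obtain ⟨hlim', hev'⟩ := hcurve x' v' hp'
    refine tendsto_nhds_unique_of_eventuallyEq hlim hlim' ?_
    filter_upwards [hev, hev'] with s ⟨hs, hs0⟩ ⟨hs', _⟩
    rw [hquot x v s hs hs0, hquot x' v' s hs' hs0, hx, hv]
  · rw [hquot x v t hp ht, hquot x' v' t hp' ht, hx, hv]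

end DiffQuot

theorem stmt_19_general (𝕂 : Type*) [Field 𝕂] [TopologicalSpace 𝕂]
    (hK : Dense {t : 𝕂 | t ≠ 0})
    (E F : Type*) [AddCommGroup E] [Module 𝕂 E] [TopologicalSpace E]
    [IsTopologicalAddGroup E] [ContinuousSMul 𝕂 E]
    [AddCommGroup F] [Module 𝕂 F] [TopologicalSpace F] [T2Space F]
    (N : Submodule 𝕂 E) (U₁ : Set (E ⧸ N))
    (U : Set E) (hU : IsOpen U) (himg : N.mkQ '' U = U₁)
    (f₁ : E ⧸ N → F) :
    -- C⁰ case: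
    (ContinuousOn (fun x : E => f₁ (N.mkQ x)) U → ContinuousOn f₁ U₁) ∧
    -- C¹ case:
    ((ContinuousOn (fun x : E => f₁ (N.mkQ x)) U ∧
        ∃ g : E × E × 𝕂 → F,
          ContinuousOn g {p : E × E × 𝕂 | p.1 ∈ U ∧ p.1 + p.2.2 • p.2.1 ∈ U} ∧
          ∀ p : E × E × 𝕂, p.1 ∈ U → p.1 + p.2.2 • p.2.1 ∈ U →
            f₁ (N.mkQ (p.1 + p.2.2 • p.2.1)) - f₁ (N.mkQ p.1) = p.2.2 • g p) →
      (ContinuousOn f₁ U₁ ∧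
        ∃ g₁ : (E ⧸ N) × (E ⧸ N) × 𝕂 → F,
          ContinuousOn g₁
            {p : (E ⧸ N) × (E ⧸ N) × 𝕂 | p.1 ∈ U₁ ∧ p.1 + p.2.2 • p.2.1 ∈ U₁} ∧
          ∀ p : (E ⧸ N) × (E ⧸ N) × 𝕂, p.1 ∈ U₁ → p.1 + p.2.2 • p.2.1 ∈ U₁ →
            f₁ (p.1 + p.2.2 • p.2.1) - f₁ p.1 = p.2.2 • g₁ p)) := by
  have hq : IsOpenMap N.mkQ := N.isOpenMap_mkQ
  have hC0 : ContinuousOn (fun x => f₁ (N.mkQ x)) U → ContinuousOn f₁ U₁ := fun hf =>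
    himg ▸ hq.continuousOn_of_comp hU hf
  refine ⟨hC0, fun ⟨hf, g, hg, hgeq⟩ => ⟨hC0 hf, ?_⟩⟩
  have hgeq' : ∀ p ∈ diffQuotDomain 𝕂 U,
      f₁ (N.mkQ (p.1 + p.2.2 • p.2.1)) - f₁ (N.mkQ p.1) = p.2.2 • g p := fun p hp =>
    hgeq p hp.1 hp.2
  obtain ⟨g₁, hg₁, hg₁g⟩ := (hq.prodMap (hq.prodMap IsOpenMap.id)).exists_continuousOn_comp_eq
    (isOpen_diffQuotDomain hU) hg (diffQuot_eq_of_map_eq hK N.mkQ f₁ hU hg hgeq')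
  rw [image_diffQuotDomain_of_surjective N.mkQ_surjective, himg] at hg₁
  refine ⟨g₁, hg₁, fun p₁ hx hy => ?_⟩
  have hp₁ : p₁ ∈ diffQuotDomain 𝕂 U₁ := ⟨hx, hy⟩
  rw [← himg, ← image_diffQuotDomain_of_surjective N.mkQ_surjective] at hp₁
  obtain ⟨p, hp, rfl⟩ := hp₁
  simpa [hg₁g p hp] using hgeq' p hp

/-- Lemma 10.4 of Bertram–Glöckner–Neeb (cases k = 0, 1): let `N ⊆ E` be a closed subspace
with quotient map `q : E → E/N`, `U₁ ⊆ E/N` open, and `U ⊆ E` open with `q(U) = U₁`.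
If `f := f₁ ∘ q|_U` is continuous, then `f₁` is continuous on `U₁`; and if `f` is C¹ in the
BGN sense (admits a continuous difference-quotient map on `U⁽¹⁾`), then so is `f₁` on `U₁`. -/
theorem stmt_19 (𝕂 : Type*) [Field 𝕂] [TopologicalSpace 𝕂] [IsTopologicalRing 𝕂] [T2Space 𝕂]
    (hK : Dense {t : 𝕂 | t ≠ 0})
    (E F : Type*) [AddCommGroup E] [Module 𝕂 E] [TopologicalSpace E]
    [IsTopologicalAddGroup E] [ContinuousSMul 𝕂 E] [T2Space E]
    [AddCommGroup F] [Module 𝕂 F] [TopologicalSpace F]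
    [IsTopologicalAddGroup F] [ContinuousSMul 𝕂 F] [T2Space F]
    (N : Submodule 𝕂 E) (hN : IsClosed (N : Set E))
    (U₁ : Set (E ⧸ N)) (hU₁ : IsOpen U₁)
    (U : Set E) (hU : IsOpen U) (himg : N.mkQ '' U = U₁)
    (f₁ : E ⧸ N → F) :
    -- C⁰ case:
    (ContinuousOn (fun x : E => f₁ (N.mkQ x)) U → ContinuousOn f₁ U₁) ∧
    -- C¹ case:
    ((ContinuousOn (fun x : E => f₁ (N.mkQ x)) U ∧
        ∃ g : E × E × 𝕂 → F,
          ContinuousOn g {p : E × E × 𝕂 | p.1 ∈ U ∧ p.1 + p.2.2 • p.2.1 ∈ U} ∧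
          ∀ p : E × E × 𝕂, p.1 ∈ U → p.1 + p.2.2 • p.2.1 ∈ U →
            f₁ (N.mkQ (p.1 + p.2.2 • p.2.1)) - f₁ (N.mkQ p.1) = p.2.2 • g p) →
      (ContinuousOn f₁ U₁ ∧
        ∃ g₁ : (E ⧸ N) × (E ⧸ N) × 𝕂 → F,
          ContinuousOn g₁
            {p : (E ⧸ N) × (E ⧸ N) × 𝕂 | p.1 ∈ U₁ ∧ p.1 + p.2.2 • p.2.1 ∈ U₁} ∧
          ∀ p : (E ⧸ N) × (E ⧸ N) × 𝕂, p.1 ∈ U₁ → p.1 + p.2.2 • p.2.1 ∈ U₁ →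
            f₁ (p.1 + p.2.2 • p.2.1) - f₁ p.1 = p.2.2 • g₁ p)) :=
  stmt_19_general 𝕂 hK E F N U₁ U hU himg f₁
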